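/- If a sequence (C_i) in C(M) satisfies d(C_i, C) → 0 for some C ∈ C(M), then C_i converges to C in the Chabauty topology. -/

import Mathlib

open Metric Filter Set Topology

/-- The space of closed subsets of `M`. -/
abbrev ClosedSubsets (M : Type*) [MetricSpace M] := {A : Set M // IsClosed A}

/-- The truncated Hausdorff pseudo-distance `d_R(A,B) = min {1, d_Haus(A_R, B_R)}`,
where `A_R = A ∩ closedBall p R`, with the convention that the Hausdorff distance between
the empty set and a nonempty set is `+∞` (so the truncation gives `1`), and between two
empty sets is `0`. -/
noncomputable def dR {M : Type*} [MetricSpace M] (p : M) (R : ℝ) (A B : Set M) : ℝ :=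
  (min 1 (EMetric.hausdorffEdist (A ∩ closedBall p R) (B ∩ closedBall p R))).toReal

/-- `d(A,B) = ∫₀^∞ e^{-R} d_R(A,B) dR`. -/
noncomputable def dChab {M : Type*} [MetricSpace M] (p : M) (A B : Set M) : ℝ :=
  ∫ R in Ioi (0 : ℝ), Real.exp (-R) * dR p R A B

/-- The Chabauty topology on the space of closed subsets of `M`, generated by the sets
`{C | C ∩ K = ∅}` for `K` compact and `{C | C ∩ U ≠ ∅}` for `U` open. -/
def Chabauty (M : Type*) [MetricSpace M] : TopologicalSpace (ClosedSubsets M) :=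
  TopologicalSpace.generateFrom
    ({S | ∃ K : Set M, IsCompact K ∧ S = {C : ClosedSubsets M | C.1 ∩ K = ∅}} ∪
     {S | ∃ U : Set M, IsOpen U ∧ S = {C : ClosedSubsets M | (C.1 ∩ U).Nonempty}})

/-!
`dChab` is a Bochner integral, which is `0` for non-integrable integrands, so the first task is
measurability of `R ↦ d_R(A, B)`: in a proper space the truncations `A ∩ closedBall p R` are
right-continuous in `R` for the Hausdorff distance, and right-continuous functions on `ℝ` are
measurable. Since `e^{-R} ≥ e^{-(R₀+1)}` on `(R₀, R₀+1)`, a small `d(C_i, C)` then forces a radius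
`R > R₀` at which the truncations of `C_i` and `C` are Hausdorff close. This gives both Chabauty
conditions: a compact `K` missing `C` is at positive distance from `C`, so `C_i` misses it, and a
point of `C` in an open `U` is approximated by points of `C_i`.
-/

open MeasureTheory TopologicalSpace
open scoped ENNReal

theorem IsCompact.exists_pos_disjoint_closedBall {M : Type*} [PseudoMetricSpace M] {K : Set M}
    (hK : IsCompact K) {p : M} {r : ℝ} (h : Disjoint K (closedBall p r)) :
    ∃ δ > 0, Disjoint K (closedBall p (r + δ)) := by
  rcases K.eq_empty_or_nonempty with rfl | hne
  · exact ⟨1, one_pos, empty_disjoint _⟩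
  obtain ⟨x₀, hx₀, hmin⟩ :=
    hK.exists_isMinOn hne (continuous_id.dist continuous_const).continuousOn
  have hr : r < dist x₀ p := not_le.1 fun hle => h.notMem_of_mem_left hx₀ (mem_closedBall.2 hle)
  refine ⟨(dist x₀ p - r) / 2, by linarith, disjoint_left.2 fun x hx hxr => ?_⟩
  have h₀ : dist x₀ p ≤ dist x p := hmin hx
  have h₁ := mem_closedBall.1 hxr
  linarith

theorem measurable_of_continuousWithinAt_Ici {X : Type*} [TopologicalSpace X]
    [PseudoMetrizableSpace X] [MeasurableSpace X] [BorelSpace X] {f : ℝ → X}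
    (hf : ∀ x, ContinuousWithinAt f (Ici x) x) : Measurable f := by
  let u : ℕ → ℝ → ℝ := fun n x => ⌈x * (n + 1)⌉ / (n + 1)
  have hu_meas (n : ℕ) : Measurable fun x => f (u n x) :=
    (measurable_of_countable fun k : ℤ => f (k / (n + 1))).comp (measurable_id.mul_const _).ceil
  have hu_ge (x : ℝ) (n : ℕ) : x ≤ u n x := (le_div_iff₀ (by positivity)).2 (Int.le_ceil _)
  have hu_le (x : ℝ) (n : ℕ) : u n x ≤ x + 1 / (n + 1) := by
    rw [div_le_iff₀ (by positivity), add_mul, one_div_mul_cancel (by positivity)]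
    exact (Int.ceil_lt_add_one _).le
  have hu_tendsto (x : ℝ) : Tendsto (fun n => u n x) atTop (𝓝[≥] x) := by
    refine tendsto_nhdsWithin_iff.2 ⟨?_, Eventually.of_forall (hu_ge x)⟩
    have hx : Tendsto (fun n : ℕ => x + 1 / ((n : ℝ) + 1)) atTop (𝓝 x) := by
      simpa using tendsto_one_div_add_atTop_nhds_zero_nat.const_add x
    exact tendsto_of_tendsto_of_tendsto_of_le_of_le tendsto_const_nhds hx (hu_ge x) (hu_le x)
  exact measurable_of_tendsto_metrizable hu_meas
    (tendsto_pi_nhds.2 fun x => (hf x).tendsto.comp (hu_tendsto x))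

namespace TopologicalSpace.Closeds

variable {M : Type*} [MetricSpace M]

def interClosedBall (A : Closeds M) (p : M) (R : ℝ) : Closeds M :=
  ⟨A ∩ closedBall p R, A.isClosed.inter isClosed_closedBall⟩

theorem continuousWithinAt_interClosedBall [ProperSpace M] (A : Closeds M) (p : M) (r : ℝ) :
    ContinuousWithinAt (A.interClosedBall p) (Ici r) r := by
  rw [ContinuousWithinAt, EMetric.tendsto_nhds]
  intro ε hε
  obtain ⟨ε', hε'0, hε'⟩ := exists_between hε
  set T : Set M := A ∩ closedBall p r
  set K : Set M := A ∩ closedBall p (r + 1) ∩ {x | ε' ≤ infEDist x T}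
  have hK : IsCompact K := by
    refine (isCompact_closedBall p (r + 1)).of_isClosed_subset ?_ fun x hx => hx.1.2
    exact (A.isClosed.inter isClosed_closedBall).inter
      (isClosed_le continuous_const Metric.continuous_infEDist)
  have hKr : Disjoint K (closedBall p r) := disjoint_left.2 fun x hxK hxr => by
    have h0 : infEDist x T = 0 := infEDist_zero_of_mem ⟨hxK.1.1, hxr⟩
    exact hε'0.not_ge (h0 ▸ hxK.2)
  obtain ⟨δ, hδ, hKδ⟩ := hK.exists_pos_disjoint_closedBall hKr
  filter_upwards [Ico_mem_nhdsGE (lt_add_of_pos_right r (lt_min hδ one_pos))] with s hs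
  refine lt_of_le_of_lt (hausdorffEDist_le_of_infEDist (fun x hx => ?_) fun x hx => ?_) hε'
  · by_contra! hlt
    have hxs : dist x p ≤ r + min δ 1 := (mem_closedBall.1 hx.2).trans hs.2.le
    refine hKδ.notMem_of_mem_left ⟨⟨hx.1, ?_⟩, hlt.le⟩ (mem_closedBall.2 ?_)
    · exact mem_closedBall.2 (hxs.trans (by gcongr; exact min_le_right _ _))
    · exact hxs.trans (by gcongr; exact min_le_left _ _)
  · have hxs : x ∈ (A : Set M) ∩ closedBall p s := ⟨hx.1, closedBall_subset_closedBall hs.1 hx.2⟩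
    exact (infEDist_zero_of_mem hxs).trans_le zero_le

end TopologicalSpace.Closeds

section dR

variable {M : Type*} [MetricSpace M] (p : M)

theorem dR_nonneg (R : ℝ) (A B : Set M) : 0 ≤ dR p R A B := ENNReal.toReal_nonneg

theorem dR_le_one (R : ℝ) (A B : Set M) : dR p R A B ≤ 1 :=
  ENNReal.toReal_le_of_le_ofReal zero_le_one (by simp)

theorem continuousWithinAt_dR [ProperSpace M] {A B : Set M} (hA : IsClosed A) (hB : IsClosed B)
    (r : ℝ) : ContinuousWithinAt (fun R => dR p R A B) (Ici r) r := by
  have hF : Continuous fun x : ℝ≥0∞ => (min 1 x).toReal :=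
    ENNReal.continuousOn_toReal.comp_continuous (continuous_const.min continuous_id)
      fun x => ne_top_of_le_ne_top ENNReal.one_ne_top (min_le_left _ _)
  exact hF.continuousAt.comp_continuousWithinAt
    ((Closeds.continuousWithinAt_interClosedBall ⟨A, hA⟩ p r).edist
      (Closeds.continuousWithinAt_interClosedBall ⟨B, hB⟩ p r))

theorem integrableOn_exp_neg_mul_dR [ProperSpace M] {A B : Set M} (hA : IsClosed A)
    (hB : IsClosed B) : IntegrableOn (fun R => Real.exp (-R) * dR p R A B) (Ioi 0) := by
  have hexp : IntegrableOn (fun R : ℝ => Real.exp (-R)) (Ioi 0) := by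
    simpa using exp_neg_integrableOn_Ioi 0 one_pos
  refine hexp.mono' ((Real.continuous_exp.comp continuous_neg).measurable.mul
    (measurable_of_continuousWithinAt_Ici (continuousWithinAt_dR p hA hB))).aestronglyMeasurable
    (Eventually.of_forall fun R => ?_)
  rw [norm_mul, Real.norm_of_nonneg (Real.exp_pos _).le, Real.norm_of_nonneg (dR_nonneg p R A B)]
  exact mul_le_of_le_one_right (Real.exp_pos _).le (dR_le_one p R A B)

theorem exists_dR_lt_of_dChab_lt [ProperSpace M] {A B : Set M} (hA : IsClosed A)
    (hB : IsClosed B) {R₀ ε : ℝ} (hR₀ : 0 ≤ R₀) (hε : 0 ≤ ε)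
    (h : dChab p A B < ε * Real.exp (-(R₀ + 1))) : ∃ R ∈ Ioo R₀ (R₀ + 1), dR p R A B < ε := by
  by_contra! hge
  have hint := integrableOn_exp_neg_mul_dR p hA hB
  have : ε * Real.exp (-(R₀ + 1)) ≤ dChab p A B := calc
    ε * Real.exp (-(R₀ + 1)) = ∫ _ in Ioo R₀ (R₀ + 1), ε * Real.exp (-(R₀ + 1)) := by
      simp
    _ ≤ ∫ R in Ioo R₀ (R₀ + 1), Real.exp (-R) * dR p R A B := by
      refine setIntegral_mono_on (integrableOn_const (by simp))
        (hint.mono_set fun R hR => hR₀.trans_lt hR.1) measurableSet_Ioo fun R hR => ?_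
      rw [mul_comm]
      exact mul_le_mul (Real.exp_le_exp.2 (by linarith [hR.2])) (hge R hR) hε (Real.exp_pos _).le
    _ ≤ dChab p A B := setIntegral_mono_set hint
      (Eventually.of_forall fun R => mul_nonneg (Real.exp_pos _).le (dR_nonneg p R A B))
      (Eventually.of_forall fun R hR => hR₀.trans_lt hR.1)
  linarith

theorem hausdorffEDist_lt_of_dR_lt {A B : Set M} {R ε : ℝ} (hε : ε ≤ 1) (h : dR p R A B < ε) :
    hausdorffEDist (A ∩ closedBall p R) (B ∩ closedBall p R) < ENNReal.ofReal ε := by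
  by_contra! hle
  have hmin : ENNReal.ofReal ε ≤ min 1 (hausdorffEDist (A ∩ closedBall p R) (B ∩ closedBall p R)) :=
    le_min (ENNReal.ofReal_le_one.2 hε) hle
  exact h.not_ge ((ENNReal.ofReal_le_iff_le_toReal
    (ne_top_of_le_ne_top ENNReal.one_ne_top (min_le_left _ _))).1 hmin)

end dR

section Convergence

variable {M : Type*} [MetricSpace M] [ProperSpace M] (p : M) {ι : Type*} {l : Filter ι}
  {A : ι → Set M} {B : Set M}

theorem eventually_exists_hausdorffEDist_lt (hA : ∀ i, IsClosed (A i)) (hB : IsClosed B)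
    (h : Tendsto (fun i => dChab p (A i) B) l (𝓝 0)) (R₀ : ℝ) {ε : ℝ} (hε : 0 < ε) :
    ∀ᶠ i in l, ∃ R ≥ R₀,
      hausdorffEDist (A i ∩ closedBall p R) (B ∩ closedBall p R) < ENNReal.ofReal ε := by
  have hpos : 0 < min ε 1 * Real.exp (-(max R₀ 0 + 1)) := by positivity
  filter_upwards [h.eventually_lt_const hpos] with i hi
  obtain ⟨R, hR, hdR⟩ :=
    exists_dR_lt_of_dChab_lt p (hA i) hB (le_max_right R₀ 0) (by positivity) hi
  exact ⟨R, (le_max_left R₀ 0).trans hR.1.le,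
    (hausdorffEDist_lt_of_dR_lt p (min_le_right ε 1) hdR).trans_le
      (ENNReal.ofReal_le_ofReal (min_le_left ε 1))⟩

theorem eventually_inter_eq_empty_of_dChab (hA : ∀ i, IsClosed (A i)) (hB : IsClosed B)
    (h : Tendsto (fun i => dChab p (A i) B) l (𝓝 0)) {K : Set M} (hK : IsCompact K)
    (hBK : B ∩ K = ∅) : ∀ᶠ i in l, A i ∩ K = ∅ := by
  obtain ⟨r, hr, hsep⟩ :=
    exists_pos_forall_lt_edist hK hB (disjoint_iff_inter_eq_empty.2 (by rwa [inter_comm]))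
  obtain ⟨R₀, hR₀⟩ := hK.isBounded.subset_closedBall p
  filter_upwards [eventually_exists_hausdorffEDist_lt p hA hB h R₀ hr] with i ⟨R, hR, hlt⟩
  refine eq_empty_of_forall_notMem fun x ⟨hxA, hxK⟩ => ?_
  have hxR : x ∈ A i ∩ closedBall p R := ⟨hxA, closedBall_subset_closedBall hR (hR₀ hxK)⟩
  obtain ⟨y, hy, hxy⟩ :=
    exists_edist_lt_of_hausdorffEDist_lt hxR (hlt.trans_eq ENNReal.ofReal_coe_nnreal)
  exact (hsep x hxK y hy.1).not_gt hxy

theorem eventually_inter_nonempty_of_dChab (hA : ∀ i, IsClosed (A i)) (hB : IsClosed B)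
    (h : Tendsto (fun i => dChab p (A i) B) l (𝓝 0)) {U : Set M} (hU : IsOpen U)
    (hBU : (B ∩ U).Nonempty) : ∀ᶠ i in l, (A i ∩ U).Nonempty := by
  obtain ⟨x, hxB, hxU⟩ := hBU
  obtain ⟨ε, hε, hball⟩ := Metric.isOpen_iff.1 hU x hxU
  filter_upwards [eventually_exists_hausdorffEDist_lt p hA hB h (dist x p) hε]
    with i ⟨R, hR, hlt⟩
  have hxR : x ∈ B ∩ closedBall p R := ⟨hxB, mem_closedBall.2 hR⟩
  obtain ⟨y, hy, hxy⟩ :=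
    exists_edist_lt_of_hausdorffEDist_lt hxR (hausdorffEDist_comm.trans_lt hlt)
  exact ⟨y, hy.1, hball (mem_ball'.2 (edist_lt_ofReal.1 hxy))⟩

end Convergence

/-- If `d(C_i, C) → 0`, then `C_i → C` in the Chabauty topology. -/
theorem tendsto_chabauty_of_dChab (M : Type*) [MetricSpace M] [ProperSpace M] (p : M)
    (C : ℕ → ClosedSubsets M) (D : ClosedSubsets M)
    (h : Tendsto (fun i => dChab p (C i).1 D.1) atTop (nhds 0)) :
    Tendsto C atTop (@nhds _ (Chabauty M) D) := by
  rw [Chabauty, TopologicalSpace.tendsto_nhds_generateFrom_iff]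
  rintro s (⟨K, hK, rfl⟩ | ⟨U, hU, rfl⟩) hDs
  · exact eventually_inter_eq_empty_of_dChab p (fun i => (C i).2) D.2 h hK hDs
  · exact eventually_inter_nonempty_of_dChab p (fun i => (C i).2) D.2 h hU hDs
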